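/- arXiv:1509.03501 — 4 statements merged into one kernel-verified Lean document; each statement's English description precedes it below -/
import Mathlib

section
/- Let B₁, B₂ be Banach spaces and A : B₁ → B₂ a continuous Fredholm operator of index zero with n-dimensional kernel spanned by x₁⁰,…,xₙ⁰ and n-dimensional cokernel, with ker A* spanned by x₁⁰*,…,xₙ⁰* ∈ B₂*. Let h₁*,…,hₙ* ∈ B₁* and h₁,…,hₙ ∈ B₂ satisfy det[hᵢ*(xⱼ⁰)] ≠ 0 and det[xᵢ⁰*(hⱼ)] ≠ 0. Then the perturbed operator A − A₁, where A₁x = ∑ᵢ hᵢ·hᵢ*(x), is a continuous bijection of B₁ onto B₂ (hence continuously invertible). -/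
/-!
Write `A₁ x = ∑ᵢ hᵢ*(x) hᵢ`. If `(A - A₁) x = 0`, applying the `x⁰ᵢ*`, which vanish on the range
of `A`, gives `det[x⁰ᵢ*(hⱼ)] · (hⱼ*(x))ⱼ = 0`; hence `A₁ x = 0`, so `x ∈ ker A` is a combination
of the `x⁰ⱼ`, and `det[hᵢ*(x⁰ⱼ)] ≠ 0` forces its coefficients to vanish. Conversely, given `y`,
the second determinant lets us subtract a combination of the `hⱼ` from `y` to land in
`ker x⁰* = range A`, and the first lets us correct the preimage by an element of `ker A` so that
`A₁` produces exactly that combination. The inverse is continuous by the open mapping theorem.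
-/

open Matrix Submodule

theorem Matrix.mulVec_surjective_of_det_ne_zero {K ι : Type*} [Field K] [Fintype ι]
    [DecidableEq ι] {M : Matrix ι ι K} (hM : M.det ≠ 0) : Function.Surjective M.mulVec :=
  mulVec_surjective_iff_isUnit.mpr ((isUnit_iff_isUnit_det M).mpr hM.isUnit)

section Perturbation

variable {𝕜 E F ι : Type*} [Field 𝕜] [AddCommGroup E] [Module 𝕜 E] [AddCommGroup F] [Module 𝕜 F]
  [Fintype ι]

theorem Module.Dual.apply_sum_smul_eq_mulVec (f : ι → Module.Dual 𝕜 E) (v : ι → E)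
    (c : ι → 𝕜) (i : ι) : f i (∑ j, c j • v j) = ((of fun i j => f i (v j)) *ᵥ c) i := by
  simp [mulVec, dotProduct, mul_comm]

def perturb (A : E →ₗ[𝕜] F) (φ : ι → Module.Dual 𝕜 E) (h : ι → F) : E →ₗ[𝕜] F :=
  A - ∑ i, (φ i).smulRight (h i)

theorem perturb_apply (A : E →ₗ[𝕜] F) (φ : ι → Module.Dual 𝕜 E) (h : ι → F) (x : E) :
    perturb A φ h x = A x - ∑ i, φ i x • h i := by
  simp [perturb]

variable [DecidableEq ι] {A : E →ₗ[𝕜] F} {φ : ι → Module.Dual 𝕜 E} {h : ι → F} {x₀ : ι → E}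
  {ψ : ι → Module.Dual 𝕜 F}

theorem ker_perturb_eq_bot (hker : LinearMap.ker A ≤ span 𝕜 (Set.range x₀))
    (hψA : ∀ i x, ψ i (A x) = 0) (hdet₁ : (of fun i j => φ i (x₀ j)).det ≠ 0)
    (hdet₂ : (of fun i j => ψ i (h j)).det ≠ 0) :
    LinearMap.ker (perturb A φ h) = ⊥ := by
  refine LinearMap.ker_eq_bot'.mpr fun x hx => ?_
  rw [perturb_apply, sub_eq_zero] at hx
  have hφx : (fun i => φ i x) = 0 := by
    refine eq_zero_of_mulVec_eq_zero hdet₂ (funext fun i => ?_)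
    rw [← Module.Dual.apply_sum_smul_eq_mulVec, ← hx, hψA]
    rfl
  have hAx : x ∈ LinearMap.ker A := by
    simp [hx, fun i => congrFun hφx i]
  obtain ⟨c, rfl⟩ := (mem_span_range_iff_exists_fun 𝕜).mp (hker hAx)
  have hc : c = 0 := by
    refine eq_zero_of_mulVec_eq_zero hdet₁ (funext fun i => ?_)
    rw [← Module.Dual.apply_sum_smul_eq_mulVec]
    exact congrFun hφx i
  simp [hc]

theorem range_perturb_eq_top (hAx₀ : ∀ j, A (x₀ j) = 0)
    (hrange : ⨅ i, LinearMap.ker (ψ i) ≤ LinearMap.range A)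
    (hdet₁ : (of fun i j => φ i (x₀ j)).det ≠ 0) (hdet₂ : (of fun i j => ψ i (h j)).det ≠ 0) :
    LinearMap.range (perturb A φ h) = ⊤ := by
  refine LinearMap.range_eq_top.mpr fun y => ?_
  obtain ⟨c, hc⟩ := mulVec_surjective_of_det_ne_zero hdet₂ fun i => ψ i y
  obtain ⟨u, hu⟩ : y - ∑ j, c j • h j ∈ LinearMap.range A := hrange <| mem_iInf _ |>.mpr fun i => by
    rw [LinearMap.mem_ker, map_sub, Module.Dual.apply_sum_smul_eq_mulVec, hc, sub_self]
  obtain ⟨d, hd⟩ := mulVec_surjective_of_det_ne_zero hdet₁ fun i => -c i - φ i u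
  have hφ : ∀ i, φ i (u + ∑ j, d j • x₀ j) = -c i := fun i => by
    rw [map_add, Module.Dual.apply_sum_smul_eq_mulVec, hd]
    ring
  refine ⟨u + ∑ j, d j • x₀ j, ?_⟩
  simp [perturb_apply, hφ, hAx₀, hu]

end Perturbation

theorem finite_dim_perturbation_invertible_general
    {B₁ B₂ : Type*}
    [NormedAddCommGroup B₁] [NormedSpace ℝ B₁] [CompleteSpace B₁]
    [NormedAddCommGroup B₂] [NormedSpace ℝ B₂] [CompleteSpace B₂]
    (A : B₁ →L[ℝ] B₂) (n : ℕ)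
    (x0 : Fin n → B₁) (xs : Fin n → (B₂ →L[ℝ] ℝ))
    (hker : LinearMap.ker (A : B₁ →ₗ[ℝ] B₂) = Submodule.span ℝ (Set.range x0))
    (hrange : LinearMap.range (A : B₁ →ₗ[ℝ] B₂) = ⨅ i : Fin n, LinearMap.ker (xs i : B₂ →ₗ[ℝ] ℝ))
    (hs : Fin n → (B₁ →L[ℝ] ℝ)) (h : Fin n → B₂)
    (hdet1 : Matrix.det (Matrix.of fun i j => (hs i) (x0 j)) ≠ 0)
    (hdet2 : Matrix.det (Matrix.of fun i j => (xs i) (h j)) ≠ 0) :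
    Function.Bijective (fun x => A x - ∑ i, (hs i) x • h i)
      ∧ Continuous (fun x => A x - ∑ i, (hs i) x • h i)
      ∧ ∃ Binv : B₂ →L[ℝ] B₁,
          (∀ x : B₁, Binv (A x - ∑ i, (hs i) x • h i) = x)
          ∧ (∀ y : B₂, A (Binv y) - ∑ i, (hs i) (Binv y) • h i = y) := by
  set T : B₁ →L[ℝ] B₂ := A - ∑ i, (hs i).smulRight (h i)
  have hT : (T : B₁ →ₗ[ℝ] B₂) = perturb A (fun i => hs i) h := by
    ext x
    simp [T, perturb_apply]
  have hTapp x : T x = A x - ∑ i, (hs i) x • h i := by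
    simpa [perturb_apply] using LinearMap.congr_fun hT x
  have hxsA i x : xs i (A x) = 0 :=
    (mem_iInf _).mp (hrange ▸ LinearMap.mem_range_self (A : B₁ →ₗ[ℝ] B₂) x) i
  have hAx0 j : A (x0 j) = 0 := hker.ge (subset_span ⟨j, rfl⟩)
  let e := ContinuousLinearEquiv.ofBijective T
    (hT ▸ ker_perturb_eq_bot hker.le hxsA hdet1 hdet2)
    (hT ▸ range_perturb_eq_top hAx0 hrange.ge hdet1 hdet2)
  refine ⟨funext hTapp ▸ e.bijective, funext hTapp ▸ T.continuous, e.symm, fun x => ?_,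
    fun y => ?_⟩
  · rw [← hTapp]
    exact e.symm_apply_apply x
  · rw [← hTapp]
    exact e.apply_symm_apply y

/-- Finite-dimensional perturbation theorem (invertibility part): if `A : B₁ → B₂` is a
continuous Fredholm operator of index zero with `n`-dimensional kernel spanned by the `x⁰ⱼ`
and cokernel described by the functionals `x⁰ᵢ*` spanning `ker A*`, and if
`det[hᵢ*(x⁰ⱼ)] ≠ 0` and `det[x⁰ᵢ*(hⱼ)] ≠ 0`, then the perturbed operator
`x ↦ Ax − ∑ᵢ hᵢ*(x) hᵢ` is a continuous bijection of `B₁` onto `B₂`, with continuous inverse. -/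
theorem finite_dim_perturbation_invertible
    {B₁ B₂ : Type*}
    [NormedAddCommGroup B₁] [NormedSpace ℝ B₁] [CompleteSpace B₁]
    [NormedAddCommGroup B₂] [NormedSpace ℝ B₂] [CompleteSpace B₂]
    (A : B₁ →L[ℝ] B₂) (n : ℕ)
    (x0 : Fin n → B₁) (xs : Fin n → (B₂ →L[ℝ] ℝ))
    (hx0li : LinearIndependent ℝ x0)
    (hker : LinearMap.ker (A : B₁ →ₗ[ℝ] B₂) = Submodule.span ℝ (Set.range x0))
    (hxsli : LinearIndependent ℝ xs)
    (hxsker : ∀ i, (xs i).comp A = 0)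
    (hxsspan : ∀ f : B₂ →L[ℝ] ℝ, f.comp A = 0 → f ∈ Submodule.span ℝ (Set.range xs))
    (hclosed : IsClosed ((LinearMap.range (A : B₁ →ₗ[ℝ] B₂)) : Set B₂))
    (hrange : LinearMap.range (A : B₁ →ₗ[ℝ] B₂) = ⨅ i : Fin n, LinearMap.ker (xs i : B₂ →ₗ[ℝ] ℝ))
    (hs : Fin n → (B₁ →L[ℝ] ℝ)) (h : Fin n → B₂)
    (hdet1 : Matrix.det (Matrix.of fun i j => (hs i) (x0 j)) ≠ 0)
    (hdet2 : Matrix.det (Matrix.of fun i j => (xs i) (h j)) ≠ 0) :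
    Function.Bijective (fun x => A x - ∑ i, (hs i) x • h i)
      ∧ Continuous (fun x => A x - ∑ i, (hs i) x • h i)
      ∧ ∃ Binv : B₂ →L[ℝ] B₁,
          (∀ x : B₁, Binv (A x - ∑ i, (hs i) x • h i) = x)
          ∧ (∀ y : B₂, A (Binv y) - ∑ i, (hs i) (Binv y) • h i = y) :=
  finite_dim_perturbation_invertible_general A n x0 xs hker hrange hs h hdet1 hdet2
end

section
/- With the notation of the finite-dimensional perturbation theorem: if y ∈ B₂ satisfies the solvability conditions xᵢ⁰*(y) = 0 for i = 1,…,n, then the unique solution x of (A − A₁)x = y satisfies A₁x = 0 (equivalently hᵢ*(x) = 0 for each i), and hence x solves Ax = y. -/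
/-! Applying each `xᵢ⁰*` to `A x - ∑ⱼ hⱼ*(x) hⱼ = y` kills `A x` and `y`, leaving the linear system
`∑ⱼ xᵢ⁰*(hⱼ) hⱼ*(x) = 0`, whose matrix is nonsingular; hence every `hⱼ*(x)` vanishes. -/

theorem eq_zero_of_forall_apply_sum_smul_eq_zero {R M ι : Type*} [CommRing R] [NoZeroDivisors R]
    [AddCommMonoid M] [Module R M] [Fintype ι] [DecidableEq ι]
    (f : ι → Module.Dual R M) (v : ι → M) (hdet : (Matrix.of fun i j => f i (v j)).det ≠ 0)
    {c : ι → R} (hc : ∀ i, f i (∑ j, c j • v j) = 0) : c = 0 := by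
  refine Matrix.eq_zero_of_mulVec_eq_zero hdet (funext fun i => ?_)
  simpa [Matrix.mulVec, dotProduct, mul_comm] using hc i

theorem finite_dim_perturbation_solution_general
    {B₁ B₂ : Type*}
    [NormedAddCommGroup B₁] [NormedSpace ℝ B₁]
    [NormedAddCommGroup B₂] [NormedSpace ℝ B₂]
    (A : B₁ →L[ℝ] B₂) (n : ℕ)
    (xs : Fin n → (B₂ →L[ℝ] ℝ))
    (hxsker : ∀ i, (xs i).comp A = 0)
    (hs : Fin n → (B₁ →L[ℝ] ℝ)) (h : Fin n → B₂)
    (hdet2 : Matrix.det (Matrix.of fun i j => (xs i) (h j)) ≠ 0)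
    (y : B₂) (hy : ∀ i, (xs i) y = 0)
    (x : B₁) (hx : A x - ∑ i, (hs i) x • h i = y) :
    (∀ i, (hs i) x = 0) ∧ (∑ i, (hs i) x • h i = 0) ∧ A x = y := by
  have hAx : ∀ i, xs i (A x) = 0 := fun i => by
    simpa using congr($(hxsker i) x)
  have hA₁x : ∀ i, (xs i : B₂ →ₗ[ℝ] ℝ) (∑ j, hs j x • h j) = 0 := fun i => by
    simpa [hAx, hy] using congr(xs i $hx)
  have hcoeff : (fun i => hs i x) = 0 :=
    eq_zero_of_forall_apply_sum_smul_eq_zero (fun i => (xs i : B₂ →ₗ[ℝ] ℝ)) h hdet2 hA₁x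
  have hA₁ : ∑ i, hs i x • h i = 0 := by simp [congrFun hcoeff]
  exact ⟨congrFun hcoeff, hA₁, by rwa [hA₁, sub_zero] at hx⟩

/-- Finite-dimensional perturbation theorem (solution part): if `y` satisfies the solvability
conditions `x⁰ᵢ*(y) = 0`, then the (unique) solution `x` of the perturbed equation
`(A − A₁)x = y` satisfies `hᵢ*(x) = 0` for each `i` (hence `A₁x = 0`), and solves `Ax = y`. -/
theorem finite_dim_perturbation_solution
    {B₁ B₂ : Type*}
    [NormedAddCommGroup B₁] [NormedSpace ℝ B₁] [CompleteSpace B₁]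
    [NormedAddCommGroup B₂] [NormedSpace ℝ B₂] [CompleteSpace B₂]
    (A : B₁ →L[ℝ] B₂) (n : ℕ)
    (x0 : Fin n → B₁) (xs : Fin n → (B₂ →L[ℝ] ℝ))
    (hx0li : LinearIndependent ℝ x0)
    (hker : LinearMap.ker (A : B₁ →ₗ[ℝ] B₂) = Submodule.span ℝ (Set.range x0))
    (hxsli : LinearIndependent ℝ xs)
    (hxsker : ∀ i, (xs i).comp A = 0)
    (hxsspan : ∀ f : B₂ →L[ℝ] ℝ, f.comp A = 0 → f ∈ Submodule.span ℝ (Set.range xs))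
    (hclosed : IsClosed (LinearMap.range (A : B₁ →ₗ[ℝ] B₂) : Set B₂))
    (hrange : LinearMap.range (A : B₁ →ₗ[ℝ] B₂) = ⨅ i : Fin n, LinearMap.ker (xs i : B₂ →ₗ[ℝ] ℝ))
    (hs : Fin n → (B₁ →L[ℝ] ℝ)) (h : Fin n → B₂)
    (hdet1 : Matrix.det (Matrix.of fun i j => (hs i) (x0 j)) ≠ 0)
    (hdet2 : Matrix.det (Matrix.of fun i j => (xs i) (h j)) ≠ 0)
    (y : B₂) (hy : ∀ i, (xs i) y = 0)
    (x : B₁) (hx : A x - ∑ i, (hs i) x • h i = y) :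
    (∀ i, (hs i) x = 0) ∧ (∑ i, (hs i) x • h i = 0) ∧ A x = y :=
  finite_dim_perturbation_solution_general A n xs hxsker hs h hdet2 y hy x hx
end

section
/- Conversely, in the same setting: if x solves (A − A₁)x = y and additionally hᵢ*(x) = 0 for i = 1,…,n, then y satisfies the solvability conditions xᵢ⁰*(y) = 0 for all i, and x solves Ax = y. -/
theorem finite_dim_perturbation_converse_general
    {B₁ B₂ : Type*}
    [NormedAddCommGroup B₁] [NormedSpace ℝ B₁]
    [NormedAddCommGroup B₂] [NormedSpace ℝ B₂]
    (A : B₁ →L[ℝ] B₂) (n : ℕ)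
    (xs : Fin n → (B₂ →L[ℝ] ℝ))
    (hxsker : ∀ i, (xs i).comp A = 0)
    (hs : Fin n → (B₁ →L[ℝ] ℝ)) (h : Fin n → B₂)
    (y : B₂)
    (x : B₁) (hx : A x - ∑ i, (hs i) x • h i = y)
    (hhx : ∀ i, (hs i) x = 0) :
    (∀ i, (xs i) y = 0) ∧ A x = y := by
  have hAx : A x = y := by
    simpa only [hhx, zero_smul, Finset.sum_const_zero, sub_zero] using hx
  refine ⟨fun i => ?_, hAx⟩
  rw [← hAx, ← ContinuousLinearMap.comp_apply, hxsker i, zero_apply]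

/-- Finite-dimensional perturbation theorem (converse part): if `x` solves the perturbed
equation `(A − A₁)x = y` and additionally `hᵢ*(x) = 0` for all `i`, then `y` satisfies the
solvability conditions `x⁰ᵢ*(y) = 0` and `x` solves `Ax = y`. -/
theorem finite_dim_perturbation_converse
    {B₁ B₂ : Type*}
    [NormedAddCommGroup B₁] [NormedSpace ℝ B₁] [CompleteSpace B₁]
    [NormedAddCommGroup B₂] [NormedSpace ℝ B₂] [CompleteSpace B₂]
    (A : B₁ →L[ℝ] B₂) (n : ℕ)
    (x0 : Fin n → B₁) (xs : Fin n → (B₂ →L[ℝ] ℝ))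
    (hx0li : LinearIndependent ℝ x0)
    (hker : LinearMap.ker (A : B₁ →ₗ[ℝ] B₂) = Submodule.span ℝ (Set.range x0))
    (hxsli : LinearIndependent ℝ xs)
    (hxsker : ∀ i, (xs i).comp A = 0)
    (hxsspan : ∀ f : B₂ →L[ℝ] ℝ, f.comp A = 0 → f ∈ Submodule.span ℝ (Set.range xs))
    (hclosed : IsClosed (LinearMap.range (A : B₁ →ₗ[ℝ] B₂) : Set B₂))
    (hrange : LinearMap.range (A : B₁ →ₗ[ℝ] B₂) = ⨅ i : Fin n, LinearMap.ker (xs i : B₂ →ₗ[ℝ] ℝ))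
    (hs : Fin n → (B₁ →L[ℝ] ℝ)) (h : Fin n → B₂)
    (hdet1 : Matrix.det (Matrix.of fun i j => (hs i) (x0 j)) ≠ 0)
    (hdet2 : Matrix.det (Matrix.of fun i j => (xs i) (h j)) ≠ 0)
    (y : B₂)
    (x : B₁) (hx : A x - ∑ i, (hs i) x • h i = y)
    (hhx : ∀ i, (hs i) x = 0) :
    (∀ i, (xs i) y = 0) ∧ A x = y :=
  finite_dim_perturbation_converse_general A n xs hxsker hs h y x hx hhx
end

section
/- Let Ω = B_{r₀}(0) ⊂ ℝ³, f(x) = −(9/2)(r₀² − |x|²)^{-1/4} + (3/4)|x|²(r₀² − |x|²)^{-5/4} and g(x) = (r₀² − |x|²)^{1/4}. Then the product f(x)g(x) = −9/2 + (3/4)|x|²(r₀² − |x|²)^{-1} is not integrable over Ω: ∫_Ω |f g| dx = +∞. -/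
open MeasureTheory

noncomputable section

set_option maxHeartbeats 1000000 in
/-- For `f(x) = −(9/2)(r₀² − |x|²)^{-1/4} + (3/4)|x|²(r₀² − |x|²)^{-5/4}` and
`g(x) = (r₀² − |x|²)^{1/4}` on the ball `Ω = B_{r₀}(0) ⊂ ℝ³`, the product equals
`−9/2 + (3/4)|x|²(r₀² − |x|²)⁻¹` in `Ω` and is not Lebesgue integrable over `Ω`:
`∫_Ω |f g| dx = +∞`. -/
theorem ball_example_fg_not_integrable
    (r₀ : ℝ) (hr₀ : 0 < r₀)
    (f g : EuclideanSpace ℝ (Fin 3) → ℝ)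
    (hf : ∀ x, f x = -(9 / 2) * (r₀ ^ 2 - ‖x‖ ^ 2) ^ (-(1 : ℝ) / 4)
          + (3 / 4) * ‖x‖ ^ 2 * (r₀ ^ 2 - ‖x‖ ^ 2) ^ (-(5 : ℝ) / 4))
    (hg : ∀ x, g x = (r₀ ^ 2 - ‖x‖ ^ 2) ^ ((1 : ℝ) / 4)) :
    (∀ x ∈ Metric.ball (0 : EuclideanSpace ℝ (Fin 3)) r₀,
        f x * g x = -(9 / 2) + (3 / 4) * ‖x‖ ^ 2 * (r₀ ^ 2 - ‖x‖ ^ 2)⁻¹)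
    ∧ ∫⁻ x in Metric.ball (0 : EuclideanSpace ℝ (Fin 3)) r₀,
        ENNReal.ofReal |f x * g x| = ⊤ := by
  have hmemball : ∀ (x : EuclideanSpace ℝ (Fin 3)) (r : ℝ),
      x ∈ Metric.ball (0 : EuclideanSpace ℝ (Fin 3)) r ↔ ‖x‖ < r := by
    intro x r; rw [Metric.mem_ball, dist_zero_right]
  have hball : ∀ x ∈ Metric.ball (0 : EuclideanSpace ℝ (Fin 3)) r₀,
      f x * g x = -(9 / 2) + (3 / 4) * ‖x‖ ^ 2 * (r₀ ^ 2 - ‖x‖ ^ 2)⁻¹ := by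
    intro x hx
    rw [hmemball] at hx
    have ht : (0:ℝ) < r₀ ^ 2 - ‖x‖ ^ 2 := by nlinarith [norm_nonneg x]
    rw [hf, hg]
    set t := r₀ ^ 2 - ‖x‖ ^ 2 with htdef
    have h1 : t ^ (-(1:ℝ)/4) * t ^ ((1:ℝ)/4) = 1 := by
      rw [← Real.rpow_add ht]
      norm_num
    have h2 : t ^ (-(5:ℝ)/4) * t ^ ((1:ℝ)/4) = t⁻¹ := by
      rw [← Real.rpow_add ht]
      have : -(5:ℝ)/4 + 1/4 = -1 := by norm_num
      rw [this, Real.rpow_neg_one]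
    have expand : (-(9/2) * t ^ (-(1:ℝ)/4) + (3/4) * ‖x‖^2 * t ^ (-(5:ℝ)/4)) * t ^ ((1:ℝ)/4)
        = -(9/2) * (t ^ (-(1:ℝ)/4) * t ^ ((1:ℝ)/4))
          + (3/4) * ‖x‖^2 * (t ^ (-(5:ℝ)/4) * t ^ ((1:ℝ)/4)) := by ring
    rw [expand, h1, h2]
    ring
  refine ⟨hball, ?_⟩
  set c : ℝ := Real.sqrt Real.pi ^ 3 / Real.Gamma (3/2 + 1) with hc
  have hcpos : 0 < c := div_pos (pow_pos (Real.sqrt_pos.mpr Real.pi_pos) 3)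
    (Real.Gamma_pos_of_pos (by norm_num))
  have hvol : ∀ r : ℝ, 0 ≤ r →
      volume (Metric.ball (0 : EuclideanSpace ℝ (Fin 3)) r) = ENNReal.ofReal (r ^ 3 * c) := by
    intro r hr
    rw [EuclideanSpace.volume_ball]
    simp only [Fintype.card_fin]
    rw [← ENNReal.ofReal_pow hr, ← ENNReal.ofReal_mul (by positivity)]
    norm_num [hc]
  set a : ℕ → ℝ := fun n => r₀ * (1 - (1/2)^n) with ha
  have hs_pos : ∀ n : ℕ, (0:ℝ) < (1/2)^n := fun n => by positivity
  have hs_le_one : ∀ n : ℕ, ((1:ℝ)/2)^n ≤ 1 :=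
    fun n => pow_le_one₀ (by norm_num) (by norm_num)
  have ha_nonneg : ∀ n, 0 ≤ a n := by
    intro n
    have := hs_le_one n
    simp only [ha]
    nlinarith
  have ha_lt : ∀ n, a n < r₀ := by
    intro n
    have := hs_pos n
    simp only [ha]
    nlinarith
  have ha_mono : ∀ m n : ℕ, m ≤ n → a m ≤ a n := by
    intro m n hmn
    have := pow_le_pow_of_le_one (by norm_num : (0:ℝ) ≤ 1/2) (by norm_num) hmn
    simp only [ha]
    nlinarith
  set S : ℕ → Set (EuclideanSpace ℝ (Fin 3)) :=
    fun n => Metric.ball (0 : EuclideanSpace ℝ (Fin 3)) (a (n+1)) \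
      Metric.ball (0 : EuclideanSpace ℝ (Fin 3)) (a n) with hS
  have hmeasS : ∀ n, MeasurableSet (S n) :=
    fun n => measurableSet_ball.diff measurableSet_ball
  -- volume lower bound for the annulus
  have hSvol : ∀ n : ℕ, 1 ≤ n →
      ENNReal.ofReal (r₀ ^ 3 * (1/2)^n * c / 8) ≤ volume (S n) := by
    intro n hn
    have hsub : Metric.ball (0 : EuclideanSpace ℝ (Fin 3)) (a n) ⊆
        Metric.ball (0 : EuclideanSpace ℝ (Fin 3)) (a (n+1)) :=
      Metric.ball_subset_ball (ha_mono n (n+1) (by omega))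
    have hdiff : volume (S n) =
        volume (Metric.ball (0 : EuclideanSpace ℝ (Fin 3)) (a (n+1))) -
        volume (Metric.ball (0 : EuclideanSpace ℝ (Fin 3)) (a n)) :=
      measure_diff hsub measurableSet_ball.nullMeasurableSet measure_ball_lt_top.ne
    rw [hdiff, hvol _ (ha_nonneg _), hvol _ (ha_nonneg _),
      ← ENNReal.ofReal_sub _ (mul_nonneg (pow_nonneg (ha_nonneg n) 3) hcpos.le)]
    apply ENNReal.ofReal_le_ofReal
    -- cube difference bound
    set s : ℝ := (1/2)^n with hsdef
    have hs1 : s ≤ 1/2 := by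
      calc s ≤ (1/2)^1 := pow_le_pow_of_le_one (by norm_num) (by norm_num) hn
      _ = 1/2 := by norm_num
    have hs0 : 0 < s := hs_pos n
    have han1 : a (n+1) = r₀ * (1 - s/2) := by
      simp only [ha, hsdef]
      ring
    have han : a n = r₀ * (1 - s) := rfl
    rw [han1, han]
    have hr3 : 0 < r₀ ^ 3 := by positivity
    have h3 : r₀ ^ 3 * s / 8 ≤ (r₀ * (1 - s/2)) ^ 3 - (r₀ * (1 - s)) ^ 3 := by
      nlinarith [mul_pos hr3 hs0, mul_nonneg (mul_pos hr3 hs0).le (sq_nonneg s),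
        mul_nonneg (mul_pos hr3 hs0).le (by linarith : (0:ℝ) ≤ 1/2 - s)]
    have h4 := mul_le_mul_of_nonneg_right h3 hcpos.le
    linarith [h4]
  -- pointwise lower bound and per-annulus integral bound
  have key : ∀ n : ℕ, 7 ≤ n →
      ENNReal.ofReal (r₀ ^ 3 * c / 256) ≤ ∫⁻ x in S n, ENNReal.ofReal |f x * g x| := by
    intro n hn
    have h2n : (72:ℝ) ≤ 2 ^ n := by
      calc (72:ℝ) ≤ 2 ^ 7 := by norm_num
      _ ≤ 2 ^ n := pow_le_pow_right₀ (by norm_num) hn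
    have hpt : ∀ x ∈ S n,
        ENNReal.ofReal ((1/32) * 2 ^ n) ≤ ENNReal.ofReal |f x * g x| := by
      intro x hx
      have hx1 : ‖x‖ < a (n+1) := (hmemball x _).mp hx.1
      have hx2 : a n ≤ ‖x‖ := le_of_not_gt (fun h => hx.2 ((hmemball x _).mpr h))
      have hxr : ‖x‖ < r₀ := hx1.trans (ha_lt _)
      have hxball : x ∈ Metric.ball (0 : EuclideanSpace ℝ (Fin 3)) r₀ :=
        (hmemball x _).mpr hxr
      have ht : (0:ℝ) < r₀ ^ 2 - ‖x‖ ^ 2 := by nlinarith [norm_nonneg x]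
      set s : ℝ := (1/2)^n with hsdef
      have hs0 : 0 < s := hs_pos n
      have hs1 : s ≤ 1/2 := by
        calc s ≤ (1/2)^1 := pow_le_pow_of_le_one (by norm_num) (by norm_num) (by omega)
        _ = 1/2 := by norm_num
      have hsu : s * 2 ^ n = 1 := by
        rw [hsdef, ← mul_pow]; norm_num
      -- ‖x‖² ≥ r₀²/4
      have han : a n = r₀ * (1 - s) := rfl
      have hx2' : r₀ * (1 - s) ≤ ‖x‖ := han ▸ hx2
      have hhalf : r₀ / 2 ≤ ‖x‖ := by nlinarith
      have hxsq : r₀ ^ 2 / 4 ≤ ‖x‖ ^ 2 := by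
        nlinarith [mul_le_mul hhalf hhalf (by positivity) (norm_nonneg x)]
      -- t ≤ 2 r₀² s
      have htub : r₀ ^ 2 - ‖x‖ ^ 2 ≤ 2 * r₀ ^ 2 * s := by nlinarith
      -- inverse bound
      have hinv : (2 * r₀ ^ 2 * s)⁻¹ ≤ (r₀ ^ 2 - ‖x‖ ^ 2)⁻¹ :=
        inv_anti₀ ht htub
      have hprod : r₀ ^ 2 / 4 * (2 * r₀ ^ 2 * s)⁻¹ ≤ ‖x‖ ^ 2 * (r₀ ^ 2 - ‖x‖ ^ 2)⁻¹ :=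
        mul_le_mul hxsq hinv (by positivity) (by positivity)
      have hval : (2 * r₀ ^ 2 * s)⁻¹ = 2 ^ n / (2 * r₀ ^ 2) := by
        rw [eq_div_iff (by positivity : (2 * r₀ ^ 2 : ℝ) ≠ 0), inv_mul_eq_div,
          div_eq_iff (by positivity : (2 * r₀ ^ 2 * s : ℝ) ≠ 0)]
        linear_combination (-(2 * r₀ ^ 2)) * hsu
      rw [hval] at hprod
      have heq : r₀ ^ 2 / 4 * (2 ^ n / (2 * r₀ ^ 2)) = 2 ^ n / 8 := by
        field_simp
        ring
      rw [heq] at hprod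
      have hge : (1/32) * 2 ^ n ≤ f x * g x := by
        rw [hball x hxball]
        linarith
      exact ENNReal.ofReal_le_ofReal (hge.trans (le_abs_self _))
    calc ENNReal.ofReal (r₀ ^ 3 * c / 256)
        = ENNReal.ofReal ((1/32) * 2 ^ n) * ENNReal.ofReal (r₀ ^ 3 * (1/2)^n * c / 8) := by
          rw [← ENNReal.ofReal_mul (by positivity)]
          congr 1
          have h : (2:ℝ) ^ n * (1/2) ^ n = 1 := by rw [← mul_pow]; norm_num
          calc r₀ ^ 3 * c / 256 = (2 ^ n * (1/2) ^ n) * (r₀ ^ 3 * c / 256) := by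
                rw [h]; ring
            _ = 1/32 * 2 ^ n * (r₀ ^ 3 * (1/2) ^ n * c / 8) := by ring
      _ ≤ ENNReal.ofReal ((1/32) * 2 ^ n) * volume (S n) :=
          mul_le_mul_right (hSvol n (by omega)) _
      _ = ∫⁻ _ in S n, ENNReal.ofReal ((1/32) * 2 ^ n) := (setLIntegral_const _ _).symm
      _ ≤ ∫⁻ x in S n, ENNReal.ofReal |f x * g x| := setLIntegral_mono' (hmeasS n) hpt
  -- disjointness
  have hdisj' : ∀ m n : ℕ, m < n → Disjoint (S m) (S n) := by
    intro m n hmn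
    rw [Set.disjoint_left]
    intro x hxm hxn
    exact hxn.2 (Metric.ball_subset_ball (ha_mono (m+1) n hmn) hxm.1)
  have hdisj : Pairwise (Function.onFun Disjoint fun n => S (n+7)) := by
    intro i j hij
    rcases hij.lt_or_gt with h | h
    · exact hdisj' _ _ (by omega)
    · exact (hdisj' _ _ (by omega)).symm
  have hsub : (⋃ n, S (n+7)) ⊆ Metric.ball (0 : EuclideanSpace ℝ (Fin 3)) r₀ := by
    intro x hx
    obtain ⟨n, hn⟩ := Set.mem_iUnion.mp hx
    exact Metric.ball_subset_ball (ha_lt _).le hn.1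
  have hne : ENNReal.ofReal (r₀ ^ 3 * c / 256) ≠ 0 :=
    (ENNReal.ofReal_pos.mpr (by positivity)).ne'
  refine top_le_iff.mp ?_
  calc (⊤ : ENNReal) = ∑' _ : ℕ, ENNReal.ofReal (r₀ ^ 3 * c / 256) :=
      (ENNReal.tsum_const_eq_top_of_ne_zero hne).symm
    _ ≤ ∑' n : ℕ, ∫⁻ x in S (n+7), ENNReal.ofReal |f x * g x| :=
      ENNReal.tsum_le_tsum fun n => key _ (by omega)
    _ = ∫⁻ x in ⋃ n, S (n+7), ENNReal.ofReal |f x * g x| :=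
      (lintegral_iUnion (fun n => hmeasS _) hdisj _).symm
    _ ≤ ∫⁻ x in Metric.ball (0 : EuclideanSpace ℝ (Fin 3)) r₀, ENNReal.ofReal |f x * g x| :=
      lintegral_mono_set hsub
end
end
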